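/- arXiv:2404.12814 — 7 statements merged into one kernel-verified Lean document; each statement's English description precedes it below -/
import Mathlib

section
/- Let ξ > 0 be a real number with ξ² > 32, and let γ be a real number with γ² = 1 + ξ²/4. Then the characteristic polynomial of the 3×3 real matrix F_{γ,ξ} = [[0, 1, 0], [-1, 0, γ], [0, -γ, -ξ]] factors as (X + ξ/2)·(X + (ξ + √(ξ² − 32))/4)·(X + (ξ − √(ξ² − 32))/4); in particular F_{γ,ξ} has the three pairwise distinct real eigenvalues −ξ/2, −(ξ + √(ξ² − 32))/4, and −(ξ − √(ξ² − 32))/4. -/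
open Matrix Polynomial

/-! Expanding the determinant, the characteristic polynomial is `X³ + ξX² + (1 + γ²)X + ξ`.
Under `γ² = 1 + ξ²/4` it vanishes at `-ξ/2`, and the remaining quadratic factor
`X² + (ξ/2)X + 2` has discriminant `(ξ² - 32)/4`, whence the other two roots. -/

section CommRing

variable {R : Type*} [CommRing R]

theorem charpoly_langevin_drift (γ ξ : R) :
    (!![0, 1, 0; -1, 0, γ; 0, -γ, -ξ] : Matrix (Fin 3) (Fin 3) R).charpoly
      = X ^ 3 + C ξ * X ^ 2 + C (1 + γ ^ 2) * X + C ξ := by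
  rw [Matrix.charpoly, Matrix.det_fin_three]
  simp only [charmatrix_apply_eq, charmatrix_apply_ne, ne_eq, Fin.reduceEq, not_false_eq_true,
    of_apply, cons_val', cons_val, cons_val_fin_one, map_zero, map_one, map_neg, map_add, map_pow]
  ring

theorem cubic_eq_mul_of_vieta {a b c p q r : R} (h₁ : p + q + r = a)
    (h₂ : p * q + p * r + q * r = b) (h₃ : p * q * r = c) :
    X ^ 3 + C a * X ^ 2 + C b * X + C c = (X + C p) * (X + C q) * (X + C r) := by
  subst h₁ h₂ h₃
  simp only [C_add, C_mul]
  ring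

theorem neg_mem_spectrum_of_charpoly_eq_mul [Nontrivial R] {n : Type*} [Fintype n]
    [DecidableEq n] {A : Matrix n n R} {p q r : R}
    (hA : A.charpoly = (X + C p) * (X + C q) * (X + C r)) :
    -p ∈ spectrum R A ∧ -q ∈ spectrum R A ∧ -r ∈ spectrum R A := by
  refine ⟨?_, ?_, ?_⟩ <;> exact mem_spectrum_of_isRoot_charpoly (by simp [hA])

end CommRing

section Field

variable {K : Type*} [Field K] [CharZero K] {γ ξ s : K}

theorem charpoly_langevin_drift_eq_mul (hγ : γ ^ 2 = 1 + ξ ^ 2 / 4) (hs : s ^ 2 = ξ ^ 2 - 32) :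
    (!![0, 1, 0; -1, 0, γ; 0, -γ, -ξ] : Matrix (Fin 3) (Fin 3) K).charpoly
      = (X + C (ξ / 2)) * (X + C ((ξ + s) / 4)) * (X + C ((ξ - s) / 4)) := by
  rw [charpoly_langevin_drift]
  apply cubic_eq_mul_of_vieta
  · ring
  · linear_combination -hγ - hs / 16
  · linear_combination -(ξ / 32) * hs

theorem langevin_eigenvalues_pairwise_ne (hs : s ^ 2 = ξ ^ 2 - 32) (hs₀ : s ≠ 0) :
    -(ξ / 2) ≠ -((ξ + s) / 4) ∧ -(ξ / 2) ≠ -((ξ - s) / 4)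
      ∧ -((ξ + s) / 4) ≠ -((ξ - s) / 4) := by
  have h32 : (32 : K) ≠ 0 := by norm_num
  refine ⟨fun h ↦ h32 ?_, fun h ↦ h32 ?_, fun h ↦ hs₀ ?_⟩
  · linear_combination -(4 * (ξ + s)) * h + hs
  · linear_combination (4 * (s - ξ)) * h + hs
  · linear_combination -2 * h

end Field

theorem charpoly_third_order_langevin_general (ξ γ : ℝ) (hξ32 : 32 < ξ ^ 2)
    (hγ : γ ^ 2 = 1 + ξ ^ 2 / 4) :
    (Matrix.charpoly (!![0, 1, 0; -1, 0, γ; 0, -γ, -ξ])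
        = (X + C (ξ / 2)) * (X + C ((ξ + Real.sqrt (ξ ^ 2 - 32)) / 4))
            * (X + C ((ξ - Real.sqrt (ξ ^ 2 - 32)) / 4)))
    ∧ (-(ξ / 2) ≠ -((ξ + Real.sqrt (ξ ^ 2 - 32)) / 4)
        ∧ -(ξ / 2) ≠ -((ξ - Real.sqrt (ξ ^ 2 - 32)) / 4)
        ∧ -((ξ + Real.sqrt (ξ ^ 2 - 32)) / 4) ≠ -((ξ - Real.sqrt (ξ ^ 2 - 32)) / 4))
    ∧ (-(ξ / 2) ∈ spectrum ℝ (!![0, 1, 0; -1, 0, γ; 0, -γ, -ξ])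
        ∧ -((ξ + Real.sqrt (ξ ^ 2 - 32)) / 4) ∈ spectrum ℝ (!![0, 1, 0; -1, 0, γ; 0, -γ, -ξ])
        ∧ -((ξ - Real.sqrt (ξ ^ 2 - 32)) / 4) ∈ spectrum ℝ (!![0, 1, 0; -1, 0, γ; 0, -γ, -ξ])) := by
  have hs : Real.sqrt (ξ ^ 2 - 32) ^ 2 = ξ ^ 2 - 32 := Real.sq_sqrt (by linarith)
  have hs₀ : Real.sqrt (ξ ^ 2 - 32) ≠ 0 := (Real.sqrt_pos.mpr (by linarith)).ne'
  have hfactor := charpoly_langevin_drift_eq_mul hγ hs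
  exact ⟨hfactor, langevin_eigenvalues_pairwise_ne hs hs₀,
    neg_mem_spectrum_of_charpoly_eq_mul hfactor⟩

/-- Let `ξ > 0` with `ξ² > 32` and let `γ` satisfy `γ² = 1 + ξ²/4`. The
characteristic polynomial of the drift matrix
`F = [[0, 1, 0], [-1, 0, γ], [0, -γ, -ξ]]` of third-order Langevin dynamics
factors as `(X + ξ/2)(X + (ξ + √(ξ² − 32))/4)(X + (ξ − √(ξ² − 32))/4)`; in
particular `F` has the three pairwise distinct real eigenvalues `−ξ/2`,
`−(ξ + √(ξ² − 32))/4`, `−(ξ − √(ξ² − 32))/4`. -/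
theorem charpoly_third_order_langevin (ξ γ : ℝ) (hξ : 0 < ξ) (hξ32 : 32 < ξ ^ 2)
    (hγ : γ ^ 2 = 1 + ξ ^ 2 / 4) :
    (Matrix.charpoly (!![0, 1, 0; -1, 0, γ; 0, -γ, -ξ])
        = (X + C (ξ / 2)) * (X + C ((ξ + Real.sqrt (ξ ^ 2 - 32)) / 4))
            * (X + C ((ξ - Real.sqrt (ξ ^ 2 - 32)) / 4)))
    ∧ (-(ξ / 2) ≠ -((ξ + Real.sqrt (ξ ^ 2 - 32)) / 4)
        ∧ -(ξ / 2) ≠ -((ξ - Real.sqrt (ξ ^ 2 - 32)) / 4)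
        ∧ -((ξ + Real.sqrt (ξ ^ 2 - 32)) / 4) ≠ -((ξ - Real.sqrt (ξ ^ 2 - 32)) / 4))
    ∧ (-(ξ / 2) ∈ spectrum ℝ (!![0, 1, 0; -1, 0, γ; 0, -γ, -ξ])
        ∧ -((ξ + Real.sqrt (ξ ^ 2 - 32)) / 4) ∈ spectrum ℝ (!![0, 1, 0; -1, 0, γ; 0, -γ, -ξ])
        ∧ -((ξ - Real.sqrt (ξ ^ 2 - 32)) / 4) ∈ spectrum ℝ (!![0, 1, 0; -1, 0, γ; 0, -γ, -ξ])) :=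
  charpoly_third_order_langevin_general ξ γ hξ32 hγ
end

section
/- Let F denote the 3×3 real matrix F = [[0, 1, 0], [-1, 0, √10], [0, -√10, -6]]. Then for every t ∈ ℝ, exp(t·F) = e^{−3t}·I₃ + (e^{−2t} − e^{−3t})·(F + 3·I₃) + ((1/2)e^{−t} − e^{−2t} + (1/2)e^{−3t})·(F + 2·I₃)·(F + 3·I₃). -/
/-!
`F` is annihilated by `(X + 1)(X + 2)(X + 3)`. Evaluating the Lagrange basis polynomials for the
nodes `-1, -2, -3` at `F` therefore gives complete orthogonal idempotents `P a` (the Frobenius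
covariants) with `p(F) = ∑ p(a) P a` for every polynomial `p`, and summing the exponential series
termwise gives `exp (t F) = ∑ e^{ta} P a`. Putzer's formula is the same matrix written in the
basis `1, F + 3, (F + 2)(F + 3)`, whose expansions in the `P a` are again instances of
`p(F) = ∑ p(a) P a`.
-/

open Polynomial Lagrange Matrix

section OrthogonalIdempotents

variable {ι : Type*} [Fintype ι]

theorem CompleteOrthogonalIdempotents.sum_smul_pow {R A : Type*} [CommSemiring R] [Semiring A]
    [Algebra R A] {e : ι → A} (he : CompleteOrthogonalIdempotents e) (c : ι → R) (n : ℕ) :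
    (∑ i, c i • e i) ^ n = ∑ i, c i ^ n • e i := by
  classical
  induction n with
  | zero => simpa using he.complete.symm
  | succ n ih =>
    simp only [pow_succ, ih, Finset.sum_mul_sum, smul_mul_smul, he.mul_eq, smul_ite, smul_zero,
      Finset.sum_ite_eq, Finset.mem_univ, if_true]

theorem CompleteOrthogonalIdempotents.exp_sum_smul {𝕂 𝔸 : Type*} [RCLike 𝕂] [Ring 𝔸]
    [Algebra 𝕂 𝔸] [TopologicalSpace 𝔸] [IsTopologicalRing 𝔸] [T2Space 𝔸] [ContinuousSMul 𝕂 𝔸]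
    {e : ι → 𝔸} (he : CompleteOrthogonalIdempotents e) (c : ι → 𝕂) :
    NormedSpace.exp (∑ i, c i • e i) = ∑ i, NormedSpace.exp (c i) • e i := by
  have hseries := hasSum_sum fun i (_ : i ∈ Finset.univ) =>
    (NormedSpace.exp_series_hasSum_exp' (𝕂 := 𝕂) (c i)).smul_const (e i)
  rw [NormedSpace.exp_eq_tsum 𝕂]
  refine HasSum.tsum_eq ?_
  simpa only [he.sum_smul_pow, Finset.smul_sum, smul_smul, smul_eq_mul] using hseries

end OrthogonalIdempotents

section FrobeniusCovariant

variable {K A : Type*} [Field K] [Ring A] [Algebra K A] {s : Finset K} {x : A}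

theorem Lagrange.nodal_dvd_of_eval_eq_zero {p : K[X]} (hp : ∀ a ∈ s, p.eval a = 0) :
    nodal s id ∣ p := by
  rw [nodal_eq]
  exact Finset.prod_dvd_of_coprime
    (fun a _ b _ hab => isCoprime_X_sub_C_of_isUnit_sub (sub_ne_zero_of_ne hab).isUnit)
    (fun a ha => dvd_iff_isRoot.2 (hp a ha))

theorem aeval_eq_zero_of_eval_eq_zero (hx : aeval x (nodal s id) = 0) {p : K[X]}
    (hp : ∀ a ∈ s, p.eval a = 0) : aeval x p = 0 := by
  obtain ⟨q, rfl⟩ := nodal_dvd_of_eval_eq_zero hp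
  rw [map_mul, hx, zero_mul]

variable [DecidableEq K]

variable (s x) in
noncomputable def frobeniusCovariant (a : K) : A :=
  aeval x (Lagrange.basis s id a)

theorem aeval_eq_sum_frobeniusCovariant (hx : aeval x (nodal s id) = 0) (p : K[X]) :
    aeval x p = ∑ a ∈ s, p.eval a • frobeniusCovariant s x a := by
  have hvanish : aeval x (p - interpolate s id (fun a => p.eval a)) = 0 :=
    aeval_eq_zero_of_eval_eq_zero hx fun a ha => by
      rw [eval_sub, sub_eq_zero]
      exact (eval_interpolate_at_node (fun a => p.eval a) (Set.injOn_id _) ha).symm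
  rw [map_sub, sub_eq_zero, interpolate_apply, map_sum] at hvanish
  simp only [map_mul, aeval_C, ← Algebra.smul_def] at hvanish
  exact hvanish

theorem completeOrthogonalIdempotents_frobeniusCovariant (hx : aeval x (nodal s id) = 0) :
    CompleteOrthogonalIdempotents fun a : s => frobeniusCovariant s x a := by
  refine CompleteOrthogonalIdempotents.iff_ortho_complete.2 ⟨fun a b hab => ?_, ?_⟩
  · change aeval x _ * aeval x _ = 0
    rw [← map_mul]
    refine aeval_eq_zero_of_eval_eq_zero hx fun c hc => ?_
    rw [eval_mul]
    by_cases hca : c = a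
    · subst hca
      exact mul_eq_zero_of_right _ (eval_basis_of_ne (v := id) (Subtype.coe_ne_coe.2 hab).symm hc)
    · exact mul_eq_zero_of_left (eval_basis_of_ne (v := id) (Ne.symm hca) hc) _
  · rw [Finset.sum_coe_sort]
    simpa using (aeval_eq_sum_frobeniusCovariant hx 1).symm

theorem exp_smul_eq_sum_frobeniusCovariant {𝕂 : Type*} [RCLike 𝕂] [DecidableEq 𝕂] [Algebra 𝕂 A]
    [TopologicalSpace A] [IsTopologicalRing A] [T2Space A] [ContinuousSMul 𝕂 A]
    {s : Finset 𝕂} {x : A} (hx : aeval x (nodal s id) = 0) (t : 𝕂) :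
    NormedSpace.exp (t • x) = ∑ a ∈ s, NormedSpace.exp (t * a) • frobeniusCovariant s x a := by
  have hdecomp : t • x = ∑ a : s, (t * a) • frobeniusCovariant s x a := by
    rw [Finset.sum_coe_sort s fun a => (t * a) • frobeniusCovariant s x a]
    simpa [Finset.smul_sum, smul_smul] using congrArg (t • ·) (aeval_eq_sum_frobeniusCovariant hx X)
  rw [hdecomp, (completeOrthogonalIdempotents_frobeniusCovariant hx).exp_sum_smul,
    Finset.sum_coe_sort s fun a => NormedSpace.exp (t * a) • frobeniusCovariant s x a]

end FrobeniusCovariant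

theorem aeval_nodal_holdDrift :
    aeval (!![0, 1, 0; -1, 0, √10; 0, -√10, -6] : Matrix (Fin 3) (Fin 3) ℝ)
      (nodal ({-1, -2, -3} : Finset ℝ) id) = 0 := by
  rw [nodal_eq, Finset.prod_insert (by norm_num), Finset.prod_insert (by norm_num),
    Finset.prod_singleton]
  simp only [map_mul, map_sub, aeval_X, aeval_C, id, Algebra.algebraMap_eq_smul_one, one_fin_three,
    smul_of]
  ext i j
  fin_cases i <;> fin_cases j <;> simp <;> ring_nf <;> simp

/-- Putzer's spectral representation of `exp(tF)` for the drift matrix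
`F = [[0, 1, 0], [-1, 0, √10], [0, -√10, -6]]` of the third-order Langevin
dynamics with `ξ = 6`, `γ = √10`:
`exp(tF) = e^{−3t} I + (e^{−2t} − e^{−3t})(F + 3I)
  + ((1/2)e^{−t} − e^{−2t} + (1/2)e^{−3t})(F + 2I)(F + 3I)`. -/
theorem exp_smul_hold_drift (t : ℝ) :
    let F : Matrix (Fin 3) (Fin 3) ℝ :=
      !![0, 1, 0; -1, 0, Real.sqrt 10; 0, -Real.sqrt 10, -6]
    NormedSpace.exp (t • F)
      = Real.exp (-3 * t) • (1 : Matrix (Fin 3) (Fin 3) ℝ)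
        + (Real.exp (-2 * t) - Real.exp (-3 * t)) • (F + 3 • (1 : Matrix (Fin 3) (Fin 3) ℝ))
        + ((1 / 2) * Real.exp (-t) - Real.exp (-2 * t) + (1 / 2) * Real.exp (-3 * t))
            • ((F + 2 • (1 : Matrix (Fin 3) (Fin 3) ℝ))
                * (F + 3 • (1 : Matrix (Fin 3) (Fin 3) ℝ))) := by
  intro F
  have hF : aeval F (nodal ({-1, -2, -3} : Finset ℝ) id) = 0 := aeval_nodal_holdDrift
  set P := frobeniusCovariant ({-1, -2, -3} : Finset ℝ) F
  have hsum := aeval_eq_sum_frobeniusCovariant hF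
  have h1 : (1 : Matrix (Fin 3) (Fin 3) ℝ) = ∑ a ∈ {-1, -2, -3}, P a := by simpa using hsum 1
  have h3 : F + 3 • 1 = ∑ a ∈ {-1, -2, -3}, (a + 3) • P a := by
    have h := hsum (X + C 3)
    simp only [map_add, aeval_X, aeval_C, eval_add, eval_X, eval_C,
      Algebra.algebraMap_eq_smul_one, ofNat_smul_eq_nsmul (R := ℝ)] at h
    exact h
  have h23 : (F + 2 • 1) * (F + 3 • 1) = ∑ a ∈ {-1, -2, -3}, ((a + 2) * (a + 3)) • P a := by
    have h := hsum ((X + C 2) * (X + C 3))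
    simp only [map_add, map_mul, aeval_X, aeval_C, eval_add, eval_mul, eval_X, eval_C,
      Algebra.algebraMap_eq_smul_one, ofNat_smul_eq_nsmul (R := ℝ)] at h
    exact h
  rw [exp_smul_eq_sum_frobeniusCovariant hF, h23, h3, h1]
  simp only [Finset.sum_insert (show (-1 : ℝ) ∉ {-2, -3} by norm_num),
    Finset.sum_insert (show (-2 : ℝ) ∉ {-3} by norm_num), Finset.sum_singleton,
    ← Real.exp_eq_exp_ℝ, mul_comm t, neg_mul, one_mul]
  module
end

section
/- Let F denote the 3×3 real matrix F = [[0, 1, 0], [-1, 0, √10], [0, -√10, -6]]. Then for every t ∈ ℝ, exp(t·F) is the 3×3 matrix whose entries are: (1,1): (5/2)e^{−t} − 2e^{−2t} + (1/2)e^{−3t}; (1,2): (5/2)e^{−t} − 4e^{−2t} + (3/2)e^{−3t}; (1,3): √10·((1/2)e^{−t} − e^{−2t} + (1/2)e^{−3t}); (2,1): −(5/2)e^{−t} + 4e^{−2t} − (3/2)e^{−3t}; (2,2): −(5/2)e^{−t} + 8e^{−2t} − (9/2)e^{−3t}; (2,3): √10·(−(1/2)e^{−t} + 2e^{−2t} −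 (3/2)e^{−3t}); (3,1): √10·((1/2)e^{−t} − e^{−2t} + (1/2)e^{−3t}); (3,2): √10·((1/2)e^{−t} − 2e^{−2t} + (3/2)e^{−3t}); (3,3): e^{−t} − 5e^{−2t} + 5e^{−3t}. -/
/-! The drift matrix has the simple eigenvalues `-1, -2, -3`, so it is diagonalizable over `ℝ`;
conjugating by an eigenbasis reduces `exp (t • F)` to the exponential of a diagonal matrix. -/

open Matrix

theorem Matrix.exp_smul_conj_diagonal {n : Type*} [Fintype n] [DecidableEq n]
    {P Q : Matrix n n ℝ} (hPQ : P * Q = 1) (d : n → ℝ) (t : ℝ) :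
    NormedSpace.exp (t • (P * diagonal d * Q))
      = P * diagonal (fun i => Real.exp (t * d i)) * Q := by
  obtain rfl : P⁻¹ = Q := inv_eq_right_inv hPQ
  have hsmul : t • (P * diagonal d * P⁻¹) = P * diagonal (t • d) * P⁻¹ := by
    rw [diagonal_smul, Matrix.mul_smul, Matrix.smul_mul]
  rw [hsmul, exp_conj P _ (IsUnit.of_mul_eq_one _ hPQ), exp_diagonal]
  congr 3
  ext i
  simp [Real.exp_eq_exp_ℝ]

noncomputable def driftEigenbasis : Matrix (Fin 3) (Fin 3) ℝ :=
  !![√10, √10, √10; -√10, -2 * √10, -3 * √10; 2, 5, 10]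

noncomputable def driftEigenbasisInv : Matrix (Fin 3) (Fin 3) ℝ :=
  !![√10 / 4, √10 / 4, 1 / 2; -√10 / 5, -2 * √10 / 5, -1; √10 / 20, 3 * √10 / 20, 1 / 2]

theorem driftEigenbasis_mul_driftEigenbasisInv : driftEigenbasis * driftEigenbasisInv = 1 := by
  ext i j
  fin_cases i <;> fin_cases j <;>
    simp [driftEigenbasis, driftEigenbasisInv, mul_apply, Fin.sum_univ_succ, one_apply] <;>
    ring_nf <;> norm_num

theorem drift_eq_conj_diagonal :
    (!![0, 1, 0; -1, 0, √10; 0, -√10, -6] : Matrix (Fin 3) (Fin 3) ℝ)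
      = driftEigenbasis * diagonal ![-1, -2, -3] * driftEigenbasisInv := by
  ext i j
  fin_cases i <;> fin_cases j <;>
    simp [driftEigenbasis, driftEigenbasisInv, mul_apply, Fin.sum_univ_succ, vecMul_diagonal] <;>
    ring_nf <;> norm_num

/-- The explicit entries of `exp(tF)` for the drift matrix
`F = [[0, 1, 0], [-1, 0, √10], [0, -√10, -6]]` of the third-order Langevin
dynamics with `ξ = 6`, `γ = √10`. -/
theorem exp_smul_hold_drift_entries (t : ℝ) :
    NormedSpace.exp
        (t • (!![0, 1, 0; -1, 0, Real.sqrt 10; 0, -Real.sqrt 10, -6] :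
          Matrix (Fin 3) (Fin 3) ℝ))
      = !![(5 / 2) * Real.exp (-t) - 2 * Real.exp (-2 * t) + (1 / 2) * Real.exp (-3 * t),
            (5 / 2) * Real.exp (-t) - 4 * Real.exp (-2 * t) + (3 / 2) * Real.exp (-3 * t),
            Real.sqrt 10 * ((1 / 2) * Real.exp (-t) - Real.exp (-2 * t) + (1 / 2) * Real.exp (-3 * t));
          -(5 / 2) * Real.exp (-t) + 4 * Real.exp (-2 * t) - (3 / 2) * Real.exp (-3 * t),
            -(5 / 2) * Real.exp (-t) + 8 * Real.exp (-2 * t) - (9 / 2) * Real.exp (-3 * t),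
            Real.sqrt 10 * (-(1 / 2) * Real.exp (-t) + 2 * Real.exp (-2 * t) - (3 / 2) * Real.exp (-3 * t));
          Real.sqrt 10 * ((1 / 2) * Real.exp (-t) - Real.exp (-2 * t) + (1 / 2) * Real.exp (-3 * t)),
            Real.sqrt 10 * ((1 / 2) * Real.exp (-t) - 2 * Real.exp (-2 * t) + (3 / 2) * Real.exp (-3 * t)),
            Real.exp (-t) - 5 * Real.exp (-2 * t) + 5 * Real.exp (-3 * t)] := by
  rw [drift_eq_conj_diagonal, exp_smul_conj_diagonal driftEigenbasis_mul_driftEigenbasisInv]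
  ext i j
  fin_cases i <;> fin_cases j <;>
    simp [driftEigenbasis, driftEigenbasisInv, mul_apply, Fin.sum_univ_succ, vecMul_diagonal] <;>
    ring_nf <;> norm_num <;> ring
end

section
/- Let F denote the 3×3 real matrix F = [[0, 1, 0], [-1, 0, √10], [0, -√10, -6]]. Then exp(t·F) tends to the zero matrix as t → +∞; consequently, for every initial vector μ₀ ∈ ℝ³ the mean μ_t = exp(t·F)·μ₀ of the transition kernel of the third-order Langevin dynamics tends to 0 as t → +∞. -/
/-!
The drift matrix `F` has characteristic polynomial `(λ + 1)(λ + 2)(λ + 3)`, so it is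
diagonalizable over `ℝ`: `F = P D P⁻¹` with `D = diag(-1, -2, -3)`. Hence
`exp(tF) = P diag(e^{-t}, e^{-2t}, e^{-3t}) P⁻¹`, which tends to `0`, and so does
`exp(tF) μ₀`.
-/

open Matrix Filter Topology

section Diagonalizable

variable {n : Type*} [Fintype n] [DecidableEq n]

theorem Matrix.exp_smul_eq_of_mul_eq_mul_diagonal {F P : Matrix n n ℝ} {d : n → ℝ}
    (hP : IsUnit P.det) (hFP : F * P = P * diagonal d) (t : ℝ) :
    NormedSpace.exp (t • F) = P * diagonal (fun i => Real.exp (t * d i)) * P⁻¹ := by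
  have hF : t • F = P * diagonal (t • d) * P⁻¹ := by
    rw [← mul_nonsing_inv_cancel_right P F hP, hFP, diagonal_smul, Matrix.mul_smul,
      Matrix.smul_mul]
  rw [hF, exp_conj P _ ((isUnit_iff_isUnit_det P).mpr hP), exp_diagonal, Pi.exp_def]
  simp [← Real.exp_eq_exp_ℝ]

theorem Matrix.tendsto_exp_smul_atTop_of_mul_eq_mul_diagonal {F P : Matrix n n ℝ} {d : n → ℝ}
    (hP : IsUnit P.det) (hFP : F * P = P * diagonal d) (hd : ∀ i, d i < 0) :
    Tendsto (fun t : ℝ => NormedSpace.exp (t • F)) atTop (𝓝 0) := by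
  have hexp : Tendsto (fun t : ℝ => fun i => Real.exp (t * d i)) atTop (𝓝 0) :=
    tendsto_pi_nhds.mpr fun i =>
      Real.tendsto_exp_atBot.comp (tendsto_id.atTop_mul_const_of_neg (hd i))
  have hdiag : Tendsto (fun t : ℝ => diagonal fun i => Real.exp (t * d i)) atTop (𝓝 0) :=
    (continuous_id.matrix_diagonal.tendsto' _ _ diagonal_zero).comp hexp
  simpa only [exp_smul_eq_of_mul_eq_mul_diagonal hP hFP, mul_zero, zero_mul] using
    (tendsto_const_nhds (x := P)).mul hdiag |>.mul (tendsto_const_nhds (x := P⁻¹))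

end Diagonalizable

noncomputable def langevinDriftEigenvectors : Matrix (Fin 3) (Fin 3) ℝ :=
  !![5, 2, 1; -5, -4, -3; √10, √10, √10]

theorem langevinDrift_mul_eigenvectors :
    !![0, 1, 0; -1, 0, √10; 0, -√10, -6] * langevinDriftEigenvectors =
      langevinDriftEigenvectors * diagonal ![-1, -2, -3] := by
  have h : √10 * √10 = (10 : ℝ) := Real.mul_self_sqrt (by norm_num)
  ext i j
  fin_cases i <;> fin_cases j <;>
    simp [langevinDriftEigenvectors, mul_apply, Fin.sum_univ_three] <;> linarith

theorem det_langevinDriftEigenvectors : langevinDriftEigenvectors.det = -2 * √10 := by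
  rw [langevinDriftEigenvectors, det_fin_three]
  simp only [of_apply, cons_val', cons_val_zero, cons_val_fin_one, cons_val_one, cons_val]
  ring

theorem isUnit_det_langevinDriftEigenvectors : IsUnit langevinDriftEigenvectors.det := by
  rw [det_langevinDriftEigenvectors, isUnit_iff_ne_zero]
  positivity

/-- For the drift matrix `F = [[0, 1, 0], [-1, 0, √10], [0, -√10, -6]]` of the
third-order Langevin dynamics with `ξ = 6`, `γ = √10`, the matrix exponential
`exp(tF)` tends to the zero matrix as `t → +∞`; consequently, for every initial
vector `μ₀ ∈ ℝ³` the mean `μ_t = exp(tF)·μ₀` of the transition kernel tends to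
`0` as `t → +∞`. -/
theorem exp_smul_hold_drift_tendsto_zero :
    let F : Matrix (Fin 3) (Fin 3) ℝ :=
      !![0, 1, 0; -1, 0, Real.sqrt 10; 0, -Real.sqrt 10, -6]
    Tendsto (fun t : ℝ => NormedSpace.exp (t • F)) atTop
        (nhds (0 : Matrix (Fin 3) (Fin 3) ℝ))
    ∧ ∀ μ₀ : Fin 3 → ℝ,
        Tendsto (fun t : ℝ => (NormedSpace.exp (t • F)).mulVec μ₀) atTop
          (nhds (0 : Fin 3 → ℝ)) := by
  intro F
  have hexp : Tendsto (fun t : ℝ => NormedSpace.exp (t • F)) atTop (𝓝 0) :=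
    tendsto_exp_smul_atTop_of_mul_eq_mul_diagonal isUnit_det_langevinDriftEigenvectors
      langevinDrift_mul_eigenvectors (by simp [Fin.forall_fin_succ])
  refine ⟨hexp, fun μ₀ => ?_⟩
  exact ((continuous_id.matrix_mulVec continuous_const).tendsto' _ _ (zero_mulVec μ₀)).comp hexp
end

section
/- Let F denote the 3×3 real matrix F = [[0, 1, 0], [-1, 0, √10], [0, -√10, -6]], let E₃₃ = diag(0, 0, 1), let L > 0 be a real number, and let Σ₀ be any 3×3 real matrix. Define for t ≥ 0 the covariance matrix Σ(t) = exp(t·F)·Σ₀·exp(t·F)ᵀ + (12/L)·∫₀ᵗ exp(s·F)·E₃₃·exp(s·F)ᵀ ds. Then Σ(t) tends to (1/L)·I₃ as t → +∞. (This identifies the equilibrium distribution of the third-order Langevin dynamics with ξ = 6, γ = √10 as the Gaussian with covariance L⁻¹·I.) -/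
/-!
Since `F + Fᵀ = -12 E₃₃`, the derivative of `s ↦ exp(sF) M exp(sF)ᵀ` at `M = L⁻¹ I` is
`-(12/L) exp(sF) E₃₃ exp(sF)ᵀ`, so the integral telescopes and
`Σ(t) = exp(tF) (Σ₀ - L⁻¹ I) exp(tF)ᵀ + L⁻¹ I`.
The drift `F` has the simple eigenvalues `-1, -2, -3`, hence `exp(tF)` is a combination of
`e^{-t}, e^{-2t}, e^{-3t}` with constant matrix coefficients and tends to `0`.
-/

open Matrix Filter intervalIntegral

attribute [local instance] Matrix.normedAddCommGroup Matrix.normedSpace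

section BanachAlgebra

variable {A : Type*} [NormedRing A] [NormedAlgebra ℝ A] [CompleteSpace A]

theorem mul_exp_smul_of_mul_eq_smul {P F : A} {μ : ℝ} (hP : P * F = μ • P) (t : ℝ) :
    P * NormedSpace.exp (t • F) = Real.exp (t * μ) • P := by
  let +nondep : NormedAlgebra ℚ A := .restrictScalars ℚ ℝ A
  have h : SemiconjBy P (t • F) (algebraMap ℝ A (t * μ)) := by
    rw [SemiconjBy, mul_smul_comm, hP, smul_smul, ← Algebra.smul_def]
  rw [h.exp_right.eq, ← NormedSpace.algebraMap_exp_comm, Real.exp_eq_exp_ℝ,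
    ← Algebra.smul_def]

theorem exp_smul_eq_sum_of_mul_eq_smul {ι : Type*} [Fintype ι] {P : ι → A} {μ : ι → ℝ}
    {F : A} (hsum : ∑ i, P i = 1) (hP : ∀ i, P i * F = μ i • P i) (t : ℝ) :
    NormedSpace.exp (t • F) = ∑ i, Real.exp (t * μ i) • P i := by
  calc NormedSpace.exp (t • F)
      = (∑ i, P i) * NormedSpace.exp (t • F) := by rw [hsum, one_mul]
    _ = ∑ i, Real.exp (t * μ i) • P i := by
      simp only [Finset.sum_mul, mul_exp_smul_of_mul_eq_smul (hP _)]

theorem tendsto_exp_smul_atTop_zero {ι : Type*} [Fintype ι] {P : ι → A} {μ : ι → ℝ}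
    {F : A} (hsum : ∑ i, P i = 1) (hP : ∀ i, P i * F = μ i • P i) (hμ : ∀ i, μ i < 0) :
    Tendsto (fun t : ℝ => NormedSpace.exp (t • F)) atTop (nhds 0) := by
  have hterm (i : ι) : Tendsto (fun t : ℝ => Real.exp (t * μ i) • P i) atTop (nhds 0) := by
    simpa using (Real.tendsto_exp_atBot.comp
      (tendsto_id.atTop_mul_const_of_neg (hμ i))).smul_const (P i)
  simpa [exp_smul_eq_sum_of_mul_eq_smul hsum hP] using
    tendsto_finsetSum Finset.univ fun i _ => hterm i

theorem hasDerivAt_exp_smul_mul_mul_exp_smul (F M G : A) (s : ℝ) :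
    HasDerivAt (fun s : ℝ => NormedSpace.exp (s • F) * M * NormedSpace.exp (s • G))
      (NormedSpace.exp (s • F) * (F * M + M * G) * NormedSpace.exp (s • G)) s := by
  convert ((hasDerivAt_exp_smul_const F s).mul_const M).fun_mul
    (hasDerivAt_exp_smul_const' G s) using 1
  simp only [mul_add, add_mul, mul_assoc]

end BanachAlgebra

namespace Matrix

variable {n : Type*} [Fintype n] [DecidableEq n]

open scoped Matrix.Norms.Operator in
theorem hasDerivAt_exp_smul_mul_mul_exp_smul_transpose (F M : Matrix n n ℝ) (s : ℝ) :
    HasDerivAt (fun s : ℝ => NormedSpace.exp (s • F) * M * (NormedSpace.exp (s • F))ᵀ)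
      (NormedSpace.exp (s • F) * (F * M + M * Fᵀ) * (NormedSpace.exp (s • F))ᵀ) s := by
  simp only [← Matrix.exp_transpose, Matrix.transpose_smul]
  exact hasDerivAt_exp_smul_mul_mul_exp_smul F M Fᵀ s

theorem integral_exp_smul_mul_mul_exp_smul_transpose {F M D : Matrix n n ℝ}
    (hlyap : F * M + M * Fᵀ = -D) (t : ℝ) :
    ∫ s in (0 : ℝ)..t, NormedSpace.exp (s • F) * D * (NormedSpace.exp (s • F))ᵀ
      = M - NormedSpace.exp (t • F) * M * (NormedSpace.exp (t • F))ᵀ := by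
  have hderiv := hasDerivAt_exp_smul_mul_mul_exp_smul_transpose F M
  simp only [hlyap, mul_neg, neg_mul] at hderiv
  have hcont :
      Continuous fun s : ℝ => NormedSpace.exp (s • F) * D * (NormedSpace.exp (s • F))ᵀ :=
    continuous_iff_continuousAt.2 fun s =>
      (hasDerivAt_exp_smul_mul_mul_exp_smul_transpose F D s).continuousAt
  have hftc :=
    integral_eq_sub_of_hasDerivAt (fun s _ => hderiv s) (hcont.neg.intervalIntegrable 0 t)
  rw [integral_neg, zero_smul, NormedSpace.exp_zero, transpose_one, one_mul, mul_one] at hftc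
  rw [← neg_sub, ← hftc, neg_neg]

theorem tendsto_mul_mul_transpose_of_tendsto_zero {α : Type*} {l : Filter α}
    {E : α → Matrix n n ℝ} (hE : Tendsto E l (nhds 0)) (X : Matrix n n ℝ) :
    Tendsto (fun a => E a * X * (E a)ᵀ) l (nhds 0) := by
  simpa using (hE.mul_const X).mul ((continuous_id.matrix_transpose.tendsto 0).comp hE)

end Matrix

namespace ThirdOrderLangevin

noncomputable def drift : Matrix (Fin 3) (Fin 3) ℝ :=
  !![0, 1, 0; -1, 0, Real.sqrt 10; 0, -Real.sqrt 10, -6]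

def noiseDirection : Matrix (Fin 3) (Fin 3) ℝ := !![0, 0, 0; 0, 0, 0; 0, 0, 1]

/-- Rank-one spectral projections of `drift`, a right eigenvector times the dual left
eigenvector, for the eigenvalues `-1, -2, -3`. -/
noncomputable def eigenproj : Fin 3 → Matrix (Fin 3) (Fin 3) ℝ :=
  ![!![5/2, 5/2, √10/2; -(5/2), -(5/2), -(√10/2); √10/2, √10/2, 1],
    !![-2, -4, -√10; 4, 8, 2*√10; -√10, -(2*√10), -5],
    !![1/2, 3/2, √10/2; -(3/2), -(9/2), -(3*√10/2); √10/2, 3*√10/2, 5]]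

theorem drift_add_transpose : drift + driftᵀ = -((12 : ℝ) • noiseDirection) := by
  ext i j
  fin_cases i <;> fin_cases j <;> norm_num [drift, noiseDirection]

theorem sum_eigenproj : ∑ i, eigenproj i = 1 := by
  ext i j
  fin_cases i <;> fin_cases j <;> simp [eigenproj, Fin.sum_univ_three, one_apply] <;> ring

theorem eigenproj_mul_drift (i : Fin 3) :
    eigenproj i * drift = (-(i + 1 : ℝ)) • eigenproj i := by
  have h10 : √10 * √10 = 10 := Real.mul_self_sqrt (by norm_num)
  fin_cases i <;>
  · ext j k
    fin_cases j <;> fin_cases k <;>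
      simp [eigenproj, drift, mul_apply, Fin.sum_univ_three] <;> nlinarith [h10]

open scoped Matrix.Norms.Operator in
theorem tendsto_exp_smul_drift :
    Tendsto (fun t : ℝ => NormedSpace.exp (t • drift)) atTop (nhds 0) :=
  tendsto_exp_smul_atTop_zero sum_eigenproj eigenproj_mul_drift fun i => by linarith

theorem smul_integral_exp_smul_drift (L t : ℝ) :
    (12 / L) • ∫ s in (0 : ℝ)..t,
        NormedSpace.exp (s • drift) * noiseDirection * (NormedSpace.exp (s • drift))ᵀ
      = (1 / L) • 1
        - NormedSpace.exp (t • drift) * ((1 / L) • 1) * (NormedSpace.exp (t • drift))ᵀ := by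
  have hlyap : drift * ((1 / L) • 1) + ((1 / L) • 1) * driftᵀ
      = -((12 / L) • noiseDirection) := by
    rw [mul_smul_comm, mul_one, smul_mul_assoc, one_mul, ← smul_add, drift_add_transpose,
      smul_neg, smul_smul]
    ring_nf
  simpa only [Matrix.mul_smul, Matrix.smul_mul, integral_smul] using
    Matrix.integral_exp_smul_mul_mul_exp_smul_transpose hlyap t

end ThirdOrderLangevin

open ThirdOrderLangevin

theorem hold_covariance_tendsto_equilibrium_general (L : ℝ)
    (Sigma0 : Matrix (Fin 3) (Fin 3) ℝ) :
    let F : Matrix (Fin 3) (Fin 3) ℝ :=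
      !![0, 1, 0; -1, 0, Real.sqrt 10; 0, -Real.sqrt 10, -6]
    let E33 : Matrix (Fin 3) (Fin 3) ℝ := !![0, 0, 0; 0, 0, 0; 0, 0, 1]
    let Sigma : ℝ → Matrix (Fin 3) (Fin 3) ℝ := fun t =>
      NormedSpace.exp (t • F) * Sigma0 * (NormedSpace.exp (t • F))ᵀ
        + (12 / L) • ∫ s in (0 : ℝ)..t,
            NormedSpace.exp (s • F) * E33 * (NormedSpace.exp (s • F))ᵀ
    Tendsto Sigma atTop (nhds ((1 / L) • (1 : Matrix (Fin 3) (Fin 3) ℝ))) := by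
  intro F E33 Sigma
  have hSigma : Sigma = fun t => NormedSpace.exp (t • drift) * (Sigma0 - (1 / L) • 1)
      * (NormedSpace.exp (t • drift))ᵀ + (1 / L) • 1 := by
    funext t
    simp only [Sigma, show F = drift from rfl, show E33 = noiseDirection from rfl,
      smul_integral_exp_smul_drift, mul_sub, sub_mul]
    abel
  rw [hSigma]
  simpa using (Matrix.tendsto_mul_mul_transpose_of_tendsto_zero tendsto_exp_smul_drift
    (Sigma0 - (1 / L) • 1)).add_const ((1 / L) • (1 : Matrix (Fin 3) (Fin 3) ℝ))

/-- For the drift matrix `F = [[0, 1, 0], [-1, 0, √10], [0, -√10, -6]]` of the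
third-order Langevin dynamics with `ξ = 6`, `γ = √10`, diffusion matrix
`G Gᵀ = (12/L) E₃₃` with `E₃₃ = diag(0,0,1)`, and any initial covariance `Σ₀`,
the covariance
`Σ(t) = exp(tF) Σ₀ exp(tF)ᵀ + (12/L) ∫₀ᵗ exp(sF) E₃₃ exp(sF)ᵀ ds`
tends to `(1/L) I₃` as `t → +∞`: the equilibrium distribution is the Gaussian
with covariance `L⁻¹ I`. -/
theorem hold_covariance_tendsto_equilibrium (L : ℝ) (hL : 0 < L)
    (Sigma0 : Matrix (Fin 3) (Fin 3) ℝ) :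
    let F : Matrix (Fin 3) (Fin 3) ℝ :=
      !![0, 1, 0; -1, 0, Real.sqrt 10; 0, -Real.sqrt 10, -6]
    let E33 : Matrix (Fin 3) (Fin 3) ℝ := !![0, 0, 0; 0, 0, 0; 0, 0, 1]
    let Sigma : ℝ → Matrix (Fin 3) (Fin 3) ℝ := fun t =>
      NormedSpace.exp (t • F) * Sigma0 * (NormedSpace.exp (t • F))ᵀ
        + (12 / L) • ∫ s in (0 : ℝ)..t,
            NormedSpace.exp (s • F) * E33 * (NormedSpace.exp (s • F))ᵀ
    Tendsto Sigma atTop (nhds ((1 / L) • (1 : Matrix (Fin 3) (Fin 3) ℝ))) :=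
  hold_covariance_tendsto_equilibrium_general L Sigma0
end

section
/- Let n ≥ 1 and let F, G, Σ₀ be n×n real matrices. Define Σ : ℝ → M_n(ℝ) by Σ(t) = exp(t·F)·Σ₀·exp(t·F)ᵀ + ∫₀ᵗ exp((t−s)·F)·G·Gᵀ·exp((t−s)·F)ᵀ ds. Then Σ(0) = Σ₀ and Σ is differentiable with Σ′(t) = F·Σ(t) + Σ(t)·Fᵀ + G·Gᵀ for every t ∈ ℝ. -/
/-!
Substituting `s ↦ t - s`, `Σ(t) = X_{Σ₀}(t) + ∫₀ᵗ X_Q(s) ds` with `Q = G Gᵀ` and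
`X_A(t) = exp(tF) A exp(tF)ᵀ`. Each `X_A` solves the linear ODE `X' = L X` for the Lyapunov
operator `L X = F X + X Fᵀ`, so integrating and pulling the continuous linear map `L` through the
integral gives `L (∫₀ᵗ X_Q) = X_Q(t) - Q`. Hence `Σ'(t) = L X_{Σ₀}(t) + X_Q(t) = L Σ(t) + Q`.
-/

open Matrix Filter intervalIntegral

attribute [local instance] Matrix.normedAddCommGroup Matrix.normedSpace

namespace Matrix

section Calculus

variable {𝕜 : Type*} [NontriviallyNormedField 𝕜] {l m n : Type*} [Fintype m] [Fintype n]

theorem _root_.HasDerivAt.matrix_transpose {f : 𝕜 → Matrix m n 𝕜} {f' : Matrix m n 𝕜} {t : 𝕜}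
    (hf : HasDerivAt f f' t) : HasDerivAt (fun u => (f u)ᵀ) f'ᵀ t :=
  hasDerivAt_pi.mpr fun j => hasDerivAt_pi.mpr fun i =>
    hasDerivAt_pi.mp (hasDerivAt_pi.mp hf i) j

theorem _root_.HasDerivAt.matrix_mul {f : 𝕜 → Matrix l m 𝕜} {g : 𝕜 → Matrix m n 𝕜}
    {f' : Matrix l m 𝕜} {g' : Matrix m n 𝕜} {t : 𝕜}
    (hf : HasDerivAt f f' t) (hg : HasDerivAt g g' t) :
    HasDerivAt (fun u => f u * g u) (f' * g t + f t * g') t := by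
  refine hasDerivAt_pi.mpr fun i => hasDerivAt_pi.mpr fun k => ?_
  simp only [mul_apply, add_apply, ← Finset.sum_add_distrib]
  exact HasDerivAt.fun_sum fun j _ =>
    (hasDerivAt_pi.mp (hasDerivAt_pi.mp hf i) j).mul
      (hasDerivAt_pi.mp (hasDerivAt_pi.mp hg j) k)

theorem hasDerivAt_exp_smul_const' {𝕂 : Type*} [RCLike 𝕂] [DecidableEq m] (A : Matrix m m 𝕂)
    (t : 𝕂) :
    HasDerivAt (fun u : 𝕂 => NormedSpace.exp (u • A)) (A * NormedSpace.exp (t • A)) t := by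
  -- `exp` depends only on the topology, so we may compute in the Banach algebra given by the
  -- L∞ operator norm.
  let _ := Matrix.linftyOpNormedRing (α := 𝕂) (n := m)
  let _ := Matrix.linftyOpNormedAlgebra (R := 𝕂) (α := 𝕂) (n := m)
  have h := @_root_.hasDerivAt_exp_smul_const' 𝕂 (Matrix m m 𝕂) _ _ _
    (inferInstanceAs (CompleteSpace (m → m → 𝕂))) A t
  refine hasDerivAt_pi.mpr fun i => hasDerivAt_pi.mpr fun j => ?_
  exact (LinearMap.toContinuousLinearMap
    (LinearMap.proj j ∘ₗ LinearMap.proj i : Matrix m m 𝕂 →ₗ[𝕂] 𝕂)).hasFDerivAt.comp_hasDerivAt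
      t h

end Calculus

section Lyapunov

open NormedSpace

variable {n : Type*} [Fintype n]

noncomputable def lyapunovOp (F : Matrix n n ℝ) : Matrix n n ℝ →L[ℝ] Matrix n n ℝ :=
  LinearMap.toContinuousLinearMap
    { toFun X := F * X + X * Fᵀ
      map_add' X Y := by simp only [Matrix.mul_add, Matrix.add_mul]; abel
      map_smul' c X := by simp }

theorem lyapunovOp_apply (F X : Matrix n n ℝ) : lyapunovOp F X = F * X + X * Fᵀ := rfl

variable [DecidableEq n]

noncomputable def expCongr (F A : Matrix n n ℝ) (t : ℝ) : Matrix n n ℝ :=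
  exp (t • F) * A * (exp (t • F))ᵀ

@[simp]
theorem expCongr_zero (F A : Matrix n n ℝ) : expCongr F A 0 = A := by
  simp [expCongr]

theorem hasDerivAt_expCongr (F A : Matrix n n ℝ) (t : ℝ) :
    HasDerivAt (expCongr F A) (lyapunovOp F (expCongr F A t)) t := by
  have hexp := hasDerivAt_exp_smul_const' F t
  refine ((hexp.matrix_mul (hasDerivAt_const t A)).matrix_mul hexp.matrix_transpose).congr_deriv ?_
  simp only [expCongr, lyapunovOp_apply, mul_zero, add_zero, transpose_mul, Matrix.mul_assoc]

theorem continuous_expCongr (F A : Matrix n n ℝ) : Continuous (expCongr F A) :=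
  continuous_iff_continuousAt.mpr fun t => (hasDerivAt_expCongr F A t).continuousAt

theorem lyapunovOp_integral_expCongr (F A : Matrix n n ℝ) (t : ℝ) :
    lyapunovOp F (∫ s in (0 : ℝ)..t, expCongr F A s) = expCongr F A t - A := by
  have hcont := continuous_expCongr F A
  calc lyapunovOp F (∫ s in (0 : ℝ)..t, expCongr F A s)
      = ∫ s in (0 : ℝ)..t, lyapunovOp F (expCongr F A s) :=
        ((lyapunovOp F).intervalIntegral_comp_comm (hcont.intervalIntegrable 0 t)).symm
    _ = expCongr F A t - expCongr F A 0 :=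
        integral_eq_sub_of_hasDerivAt (fun s _ => hasDerivAt_expCongr F A s)
          (((lyapunovOp F).continuous.comp hcont).intervalIntegrable 0 t)
    _ = expCongr F A t - A := by rw [expCongr_zero]

theorem hasDerivAt_expCongr_add_integral_expCongr (F Q Sigma0 : Matrix n n ℝ) (t : ℝ) :
    HasDerivAt (fun t => expCongr F Sigma0 t + ∫ s in (0 : ℝ)..t, expCongr F Q s)
      (lyapunovOp F (expCongr F Sigma0 t + ∫ s in (0 : ℝ)..t, expCongr F Q s) + Q) t := by
  rw [map_add, lyapunovOp_integral_expCongr, add_assoc, sub_add_cancel]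
  exact (hasDerivAt_expCongr F Sigma0 t).fun_add
    ((continuous_expCongr F Q).integral_hasStrictDerivAt 0 t).hasDerivAt

end Lyapunov

end Matrix

theorem lyapunov_ode_covariance_general (n : ℕ)
    (F G Sigma0 : Matrix (Fin n) (Fin n) ℝ) :
    let Sigma : ℝ → Matrix (Fin n) (Fin n) ℝ := fun t =>
      NormedSpace.exp (t • F) * Sigma0 * (NormedSpace.exp (t • F))ᵀ
        + ∫ s in (0 : ℝ)..t,
            NormedSpace.exp ((t - s) • F) * (G * Gᵀ)
              * (NormedSpace.exp ((t - s) • F))ᵀ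
    Sigma 0 = Sigma0
      ∧ ∀ t : ℝ, HasDerivAt Sigma (F * Sigma t + Sigma t * Fᵀ + G * Gᵀ) t := by
  intro Sigma
  have hSigma :
      Sigma = fun t => expCongr F Sigma0 t + ∫ s in (0 : ℝ)..t, expCongr F (G * Gᵀ) s := by
    funext t
    have hsubst := integral_comp_sub_left (expCongr F (G * Gᵀ)) (a := 0) (b := t) t
    rw [sub_self, sub_zero] at hsubst
    exact congrArg (expCongr F Sigma0 t + ·) hsubst
  refine ⟨by simp [hSigma], fun t => ?_⟩
  rw [hSigma]
  exact hasDerivAt_expCongr_add_integral_expCongr F (G * Gᵀ) Sigma0 t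

/-- For a linear SDE `dx = F x dt + G dw` with constant `n × n` coefficient
matrices `F` and `G` and initial covariance `Σ₀`, the covariance
`Σ(t) = exp(tF) Σ₀ exp(tF)ᵀ + ∫₀ᵗ exp((t−s)F) G Gᵀ exp((t−s)F)ᵀ ds`
satisfies `Σ(0) = Σ₀` and the Lyapunov ODE
`Σ′(t) = F Σ(t) + Σ(t) Fᵀ + G Gᵀ` for every `t`. -/
theorem lyapunov_ode_covariance (n : ℕ) (hn : 1 ≤ n)
    (F G Sigma0 : Matrix (Fin n) (Fin n) ℝ) :
    let Sigma : ℝ → Matrix (Fin n) (Fin n) ℝ := fun t =>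
      NormedSpace.exp (t • F) * Sigma0 * (NormedSpace.exp (t • F))ᵀ
        + ∫ s in (0 : ℝ)..t,
            NormedSpace.exp ((t - s) • F) * (G * Gᵀ)
              * (NormedSpace.exp ((t - s) • F))ᵀ
    Sigma 0 = Sigma0
      ∧ ∀ t : ℝ, HasDerivAt Sigma (F * Sigma t + Sigma t * Fᵀ + G * Gᵀ) t :=
  lyapunov_ode_covariance_general n F G Sigma0
end

section
/- Let p₀ : ℝᵐ → ℝ be a probability density and let k : ℝⁿ × ℝᵐ → ℝ be such that for each y ∈ ℝᵐ the function x ↦ k(x, y) is a strictly positive, differentiable probability density on ℝⁿ. Define p(x) = ∫_{ℝᵐ} k(x, y)·p₀(y) dy and assume p is strictly positive and differentiable with ∇p(x) = ∫_{ℝᵐ} ∇ₓk(x, y)·p₀(y) dy for every x. Let S : ℝⁿ → ℝⁿ be measurable, and assume the functions x ↦ p(x)‖S(x)‖², x ↦ p(x)‖∇ log p(x)‖², (x,y) ↦ p₀(y)k(x,y)‖∇ₓ log k(x,y)‖², and (x,y) ↦ p₀(y)k(x,y)·⟨S(x), ∇ₓ log k(x,y)⟩ are integrable (the last one with respect to the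 product measure, so that Fubini's theorem applies). Then ∫ p(x)·‖S(x) − ∇ log p(x)‖² dx − ∫∫ p₀(y)·k(x,y)·‖S(x) − ∇ₓ log k(x,y)‖² dx dy = ∫ p(x)·‖∇ log p(x)‖² dx − ∫∫ p₀(y)·k(x,y)·‖∇ₓ log k(x,y)‖² dx dy. In particular, the score-matching objective and the denoising/marginalized score-matching objective differ by a constant independent of S; this yields the equivalence of SM with DSM, HSM and the block coordinate score matching (BCSM) objective. -/
set_option maxHeartbeats 1000000

open MeasureTheory Filter Topology RealInnerProductSpace
open scoped Classical

namespace SMAux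

variable {n m : ℕ}

theorem hasGradientAt_log {q : EuclideanSpace ℝ (Fin n) → ℝ}
    {x : EuclideanSpace ℝ (Fin n)} (hq : DifferentiableAt ℝ q x) (hpos : 0 < q x) :
    HasGradientAt (fun x' => Real.log (q x')) ((q x)⁻¹ • gradient q x) x := by
  have h1 : HasFDerivAt q (InnerProductSpace.toDual ℝ _ (gradient q x)) x :=
    hq.hasGradientAt.hasFDerivAt
  have h2 := (Real.hasDerivAt_log (ne_of_gt hpos)).comp_hasFDerivAt x h1
  rw [hasGradientAt_iff_hasFDerivAt, _root_.map_smul]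
  exact h2

theorem gradient_log_eq {q : EuclideanSpace ℝ (Fin n) → ℝ}
    {x : EuclideanSpace ℝ (Fin n)} (hq : DifferentiableAt ℝ q x) (hpos : 0 < q x) :
    gradient (fun x' => Real.log (q x')) x = (q x)⁻¹ • gradient q x :=
  (hasGradientAt_log hq hpos).gradient

theorem gradient_const_mul {q : EuclideanSpace ℝ (Fin n) → ℝ}
    {x : EuclideanSpace ℝ (Fin n)} (hq : DifferentiableAt ℝ q x) (c : ℝ) :
    gradient (fun x' => c * q x') x = c • gradient q x := by
  have h1 : HasFDerivAt q (InnerProductSpace.toDual ℝ _ (gradient q x)) x :=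
    hq.hasGradientAt.hasFDerivAt
  have h2 := h1.const_mul c
  have h3 : HasGradientAt (fun x' => c * q x') (c • gradient q x) x := by
    rw [hasGradientAt_iff_hasFDerivAt, _root_.map_smul]
    exact h2
  exact h3.gradient

theorem gradient_eq_sum' (f : EuclideanSpace ℝ (Fin n) → ℝ) (x : EuclideanSpace ℝ (Fin n)) :
    gradient f x
      = ∑ i, (fderiv ℝ f x (EuclideanSpace.single i 1)) • EuclideanSpace.single i (1:ℝ) := by
  set b := EuclideanSpace.basisFun (Fin n) ℝ with hb
  have := b.sum_repr' (gradient f x)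
  rw [← this]
  refine Finset.sum_congr rfl fun i _ => ?_
  have h1 : ⟪b i, gradient f x⟫ = fderiv ℝ f x (b i) := by
    rw [real_inner_comm]
    exact InnerProductSpace.toDual_symm_apply
  rw [h1]
  simp [hb, EuclideanSpace.basisFun_apply]

theorem measurable_gradient (f : EuclideanSpace ℝ (Fin n) → ℝ) :
    Measurable fun x => gradient f x := by
  rw [show (fun x => gradient f x)
      = fun x => ∑ i, (fderiv ℝ f x (EuclideanSpace.single i 1)) •
          EuclideanSpace.single i (1:ℝ) from funext (gradient_eq_sum' f)]
  exact Finset.measurable_sum _ fun i _ =>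
    (measurable_fderiv_apply_const (𝕜 := ℝ) (f := f) (EuclideanSpace.single i 1)).smul_const _

theorem exists_nullset (f : EuclideanSpace ℝ (Fin n) → EuclideanSpace ℝ (Fin m) → ℝ)
    (hcont : ∀ y, Continuous fun x => f x y)
    (hslice : ∀ x, AEStronglyMeasurable (fun y => f x y) volume) :
    ∃ N : Set (EuclideanSpace ℝ (Fin m)), MeasurableSet N ∧ volume N = 0 ∧
      ∀ x, Measurable fun y => if y ∈ N then (0:ℝ) else f x y := by
  have hne : Nonempty (EuclideanSpace ℝ (Fin n)) := ⟨0⟩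
  set u : ℕ → EuclideanSpace ℝ (Fin n) := TopologicalSpace.denseSeq _ with hu
  have hdense : DenseRange u := TopologicalSpace.denseRange_denseSeq _
  choose g hg_meas hg_eq using fun j => hslice (u j)
  set N : Set (EuclideanSpace ℝ (Fin m)) :=
    ⋃ j, toMeasurable volume {y | f (u j) y ≠ g j y} with hN
  have hNmeas : MeasurableSet N :=
    MeasurableSet.iUnion fun j => measurableSet_toMeasurable _ _
  have hNnull : volume N = 0 := by
    refine measure_iUnion_null fun j => ?_
    rw [measure_toMeasurable]
    exact hg_eq j
  refine ⟨N, hNmeas, hNnull, ?_⟩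
  have hseq : ∀ j, Measurable fun y => if y ∈ N then (0:ℝ) else f (u j) y := by
    intro j
    have : (fun y => if y ∈ N then (0:ℝ) else f (u j) y)
        = fun y => if y ∈ N then (0:ℝ) else g j y := by
      funext y
      by_cases hy : y ∈ N
      · simp [hy]
      · have : y ∉ toMeasurable volume {y | f (u j) y ≠ g j y} := fun h => hy (Set.mem_iUnion.2 ⟨j, h⟩)
        have : y ∉ {y | f (u j) y ≠ g j y} := fun h => this (subset_toMeasurable _ _ h)
        simp only [Set.mem_setOf_eq, not_not] at this
        simp [hy, this]
    rw [this]
    exact Measurable.ite hNmeas measurable_const (hg_meas j).measurable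
  intro x
  obtain ⟨v, hv_mem, hv_tendsto⟩ : ∃ v : ℕ → EuclideanSpace ℝ (Fin n),
      (∀ i, v i ∈ Set.range u) ∧ Tendsto v atTop (𝓝 x) := by
    have hx : x ∈ closure (Set.range u) := by
      rw [hdense.closure_range]; trivial
    exact mem_closure_iff_seq_limit.1 hx
  refine measurable_of_tendsto_metrizable (f := fun i y => if y ∈ N then (0:ℝ) else f (v i) y)
    (fun i => ?_) ?_
  · obtain ⟨j, hj⟩ := hv_mem i
    simpa [hj] using hseq j
  · rw [tendsto_pi_nhds]
    intro y
    by_cases hy : y ∈ N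
    · simp only [hy, if_true]
      exact tendsto_const_nhds
    · simp only [hy, if_false]
      exact ((hcont y).tendsto x).comp hv_tendsto

theorem measurable_uncurry (f : EuclideanSpace ℝ (Fin n) → EuclideanSpace ℝ (Fin m) → ℝ)
    (hcont : ∀ y, Continuous fun x => f x y)
    (hmeas : ∀ x, Measurable fun y => f x y) :
    Measurable fun z : EuclideanSpace ℝ (Fin n) × EuclideanSpace ℝ (Fin m) => f z.1 z.2 :=
  measurable_uncurry_of_continuous_of_measurable hcont hmeas

theorem measurable_gradient_uncurry (f : EuclideanSpace ℝ (Fin n) → EuclideanSpace ℝ (Fin m) → ℝ)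
    (hdiff : ∀ y, Differentiable ℝ fun x => f x y)
    (hmeas : Measurable fun z : EuclideanSpace ℝ (Fin n) × EuclideanSpace ℝ (Fin m) => f z.1 z.2) :
    Measurable fun z : EuclideanSpace ℝ (Fin n) × EuclideanSpace ℝ (Fin m) =>
      gradient (fun x => f x z.2) z.1 := by
  have key : ∀ i : Fin n, Measurable fun z : EuclideanSpace ℝ (Fin n) × EuclideanSpace ℝ (Fin m) =>
      fderiv ℝ (fun x => f x z.2) z.1 (EuclideanSpace.single i 1) := by
    intro i
    have hc : Tendsto (fun j : ℕ => ((j:ℝ)+1)) atTop atTop :=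
      tendsto_atTop_add_const_right _ 1 tendsto_natCast_atTop_atTop
    have hcn : Tendsto (fun j : ℕ => ‖((j:ℝ)+1)‖) atTop atTop := by
      have he : (fun j : ℕ => ‖((j:ℝ)+1)‖) = fun j : ℕ => ((j:ℝ)+1) := by
        funext j; rw [Real.norm_eq_abs, abs_of_nonneg (by positivity)]
      rw [he]; exact hc
    have htend : ∀ z : EuclideanSpace ℝ (Fin n) × EuclideanSpace ℝ (Fin m), Tendsto
        (fun j : ℕ => ((j:ℝ)+1) •
          (f (z.1 + ((j:ℝ)+1)⁻¹ • EuclideanSpace.single i 1) z.2 - f z.1 z.2))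
        atTop (𝓝 (fderiv ℝ (fun x => f x z.2) z.1 (EuclideanSpace.single i 1))) := fun z =>
      (hdiff z.2 z.1).hasFDerivAt.lim (EuclideanSpace.single i 1) hcn
    refine measurable_of_tendsto_metrizable
      (f := fun j z => ((j:ℝ)+1) •
        (f (z.1 + ((j:ℝ)+1)⁻¹ • EuclideanSpace.single i 1) z.2 - f z.1 z.2))
      (fun j => ?_) (tendsto_pi_nhds.2 htend)
    have hshift : Measurable fun z : EuclideanSpace ℝ (Fin n) × EuclideanSpace ℝ (Fin m) =>
        f (z.1 + ((j:ℝ)+1)⁻¹ • EuclideanSpace.single i 1) z.2 := by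
      exact hmeas.comp (((continuous_fst.add continuous_const).prodMk continuous_snd).measurable :
        Measurable fun z : EuclideanSpace ℝ (Fin n) × EuclideanSpace ℝ (Fin m) =>
          (z.1 + ((j:ℝ)+1)⁻¹ • EuclideanSpace.single i 1, z.2))
    exact (hshift.sub hmeas).const_smul (((j:ℝ)+1))
  have heq : (fun z : EuclideanSpace ℝ (Fin n) × EuclideanSpace ℝ (Fin m) =>
      gradient (fun x => f x z.2) z.1)
      = fun z => ∑ i, (fderiv ℝ (fun x => f x z.2) z.1 (EuclideanSpace.single i 1)) •
          EuclideanSpace.single i (1:ℝ) := by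
    funext z; exact gradient_eq_sum' _ _
  rw [heq]
  exact Finset.measurable_sum _ fun i _ => (key i).smul_const _

end SMAux


/-- Equivalence of score matching with denoising / marginalized score matching
(DSM, HSM, BCSM).  Let `p₀` be a probability density on `ℝᵐ`, let `k(·, y)` be
strictly positive differentiable probability densities on `ℝⁿ`, and let
`p(x) = ∫ k(x, y) p₀(y) dy` be strictly positive and differentiable with
`∇p(x) = ∫ ∇ₓk(x, y) p₀(y) dy`.  Then, under the stated integrability
assumptions, for every measurable vector field `S`,
`∫ p‖S − ∇log p‖² − ∫∫ p₀ k ‖S − ∇ₓ log k‖² = ∫ p‖∇log p‖² − ∫∫ p₀ k ‖∇ₓ log k‖²`,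
i.e. the two objectives differ by a constant independent of `S`. -/

theorem score_matching_eq_denoising_score_matching (n m : ℕ)
    (p₀ : EuclideanSpace ℝ (Fin m) → ℝ)
    (hp₀_nonneg : ∀ y, 0 ≤ p₀ y) (hp₀_meas : Measurable p₀)
    (hp₀_int : ∫ y, p₀ y = 1)
    (k : EuclideanSpace ℝ (Fin n) → EuclideanSpace ℝ (Fin m) → ℝ)
    (hk_pos : ∀ x y, 0 < k x y)
    (hk_diff : ∀ y, Differentiable ℝ fun x => k x y)
    (hk_int : ∀ y, ∫ x, k x y = 1)
    (p : EuclideanSpace ℝ (Fin n) → ℝ)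
    (hp_def : ∀ x, p x = ∫ y, k x y * p₀ y)
    (hp_pos : ∀ x, 0 < p x)
    (hp_diff : Differentiable ℝ p)
    (hp_grad : ∀ x, gradient p x = ∫ y, p₀ y • gradient (fun x' => k x' y) x)
    (S : EuclideanSpace ℝ (Fin n) → EuclideanSpace ℝ (Fin n))
    (hS : Measurable S)
    (hint₁ : Integrable fun x => p x * ‖S x‖ ^ 2)
    (hint₂ : Integrable fun x =>
      p x * ‖gradient (fun x' => Real.log (p x')) x‖ ^ 2)
    (hint₃ : Integrable fun z : EuclideanSpace ℝ (Fin n) × EuclideanSpace ℝ (Fin m) =>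
      p₀ z.2 * k z.1 z.2 * ‖gradient (fun x' => Real.log (k x' z.2)) z.1‖ ^ 2)
    (hint₄ : Integrable fun z : EuclideanSpace ℝ (Fin n) × EuclideanSpace ℝ (Fin m) =>
      p₀ z.2 * k z.1 z.2 * ⟪S z.1, gradient (fun x' => Real.log (k x' z.2)) z.1⟫) :
    (∫ x, p x * ‖S x - gradient (fun x' => Real.log (p x')) x‖ ^ 2)
        - ∫ z : EuclideanSpace ℝ (Fin n) × EuclideanSpace ℝ (Fin m),
            p₀ z.2 * k z.1 z.2 * ‖S z.1 - gradient (fun x' => Real.log (k x' z.2)) z.1‖ ^ 2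
      = (∫ x, p x * ‖gradient (fun x' => Real.log (p x')) x‖ ^ 2)
          - ∫ z : EuclideanSpace ℝ (Fin n) × EuclideanSpace ℝ (Fin m),
              p₀ z.2 * k z.1 z.2 * ‖gradient (fun x' => Real.log (k x' z.2)) z.1‖ ^ 2 := by
  -- basic gradient identities
  have hgradp : ∀ x, gradient p x = p x • gradient (fun x' => Real.log (p x')) x := by
    intro x
    rw [SMAux.gradient_log_eq (hp_diff x) (hp_pos x), smul_inv_smul₀ (hp_pos x).ne']
  have hgradk : ∀ (x : EuclideanSpace ℝ (Fin n)) (y : EuclideanSpace ℝ (Fin m)),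
      gradient (fun x' => k x' y) x = k x y • gradient (fun x' => Real.log (k x' y)) x := by
    intro x y
    rw [SMAux.gradient_log_eq (hk_diff y x) (hk_pos x y), smul_inv_smul₀ (hk_pos x y).ne']
  -- integrability of the kernel slices
  have hkp_int : ∀ x, Integrable (fun y => k x y * p₀ y) := by
    intro x
    by_contra h
    have h0 := integral_undef h
    rw [← hp_def x] at h0
    exact (hp_pos x).ne' h0
  -- the null set for measurability
  obtain ⟨N, hNmeas, hNnull, hNslice⟩ := SMAux.exists_nullset (fun x y => k x y * p₀ y)
    (fun y => ((hk_diff y).continuous.mul continuous_const))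
    (fun x => (hkp_int x).1)
  have hNae : ∀ᵐ y : EuclideanSpace ℝ (Fin m), y ∉ N := by
    rw [ae_iff]
    simpa [not_not] using hNnull
  have hae2 : ∀ᵐ z : EuclideanSpace ℝ (Fin n) × EuclideanSpace ℝ (Fin m), z.2 ∉ N := by
    rw [ae_iff]
    have h1 : {z : EuclideanSpace ℝ (Fin n) × EuclideanSpace ℝ (Fin m) | ¬ z.2 ∉ N}
        = Set.univ ×ˢ N := by
      ext z; simp [not_not, Set.mem_prod]
    rw [h1, Measure.volume_eq_prod, Measure.prod_prod, hNnull, mul_zero]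
  -- joint measurability of the kernel
  have hftil_cont : ∀ y, Continuous fun x => if y ∈ N then (0:ℝ) else k x y * p₀ y := by
    intro y
    by_cases hy : y ∈ N
    · simp only [hy, if_true]; exact continuous_const
    · simp only [hy, if_false]; exact (hk_diff y).continuous.mul continuous_const
  have hftil_meas : Measurable fun z : EuclideanSpace ℝ (Fin n) × EuclideanSpace ℝ (Fin m) =>
      if z.2 ∈ N then (0:ℝ) else k z.1 z.2 * p₀ z.2 :=
    SMAux.measurable_uncurry _ hftil_cont hNslice
  have hkp_aesm_prod : AEStronglyMeasurable
      (fun z : EuclideanSpace ℝ (Fin n) × EuclideanSpace ℝ (Fin m) => k z.1 z.2 * p₀ z.2)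
      volume := by
    refine hftil_meas.aestronglyMeasurable.congr ?_
    filter_upwards [hae2] with z hz
    simp [hz]
  -- the ‖S‖² term on the product space
  have hT_int : Integrable (fun z : EuclideanSpace ℝ (Fin n) × EuclideanSpace ℝ (Fin m) =>
      p₀ z.2 * k z.1 z.2 * ‖S z.1‖ ^ 2) := by
    have haesm : AEStronglyMeasurable
        (fun z : EuclideanSpace ℝ (Fin n) × EuclideanSpace ℝ (Fin m) =>
          p₀ z.2 * k z.1 z.2 * ‖S z.1‖ ^ 2) volume := by
      have h1 := hkp_aesm_prod.mul
        (((hS.comp measurable_fst).norm.pow_const 2).aestronglyMeasurable)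
      refine h1.congr (Filter.Eventually.of_forall fun z => ?_)
      simp only [Pi.mul_apply, Function.comp_apply]
      ring
    rw [Measure.volume_eq_prod] at haesm ⊢
    refine (integrable_prod_iff haesm).2 ⟨?_, ?_⟩
    · refine Filter.Eventually.of_forall fun x => ?_
      exact ((hkp_int x).mul_const (‖S x‖ ^ 2)).congr
        (Filter.Eventually.of_forall fun y => by ring)
    · have h2 : (fun x => ∫ y, ‖p₀ y * k x y * ‖S x‖ ^ 2‖) = fun x => p x * ‖S x‖ ^ 2 := by
        funext x
        have h0 : (fun y => ‖p₀ y * k x y * ‖S x‖ ^ 2‖)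
            = fun y => (k x y * p₀ y) * ‖S x‖ ^ 2 := by
          funext y
          rw [Real.norm_eq_abs, abs_of_nonneg
            (mul_nonneg (mul_nonneg (hp₀_nonneg y) (hk_pos x y).le) (sq_nonneg _))]
          ring
        rw [h0, integral_mul_const, ← hp_def x]
      rw [h2]
      exact hint₁
  have hT_eq : (∫ z : EuclideanSpace ℝ (Fin n) × EuclideanSpace ℝ (Fin m),
      p₀ z.2 * k z.1 z.2 * ‖S z.1‖ ^ 2) = ∫ x, p x * ‖S x‖ ^ 2 := by
    have hT_int' := hT_int
    rw [Measure.volume_eq_prod] at hT_int' ⊢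
    rw [integral_prod _ hT_int']
    congr 1
    funext x
    have h0 : (fun y => p₀ y * k x y * ‖S x‖ ^ 2)
        = fun y => (k x y * p₀ y) * ‖S x‖ ^ 2 := by funext y; ring
    rw [h0, integral_mul_const, ← hp_def x]
  -- joint measurability of the weighted gradient
  have hf'_meas : Measurable fun z : EuclideanSpace ℝ (Fin n) × EuclideanSpace ℝ (Fin m) =>
      (if z.2 ∈ N then (0:ℝ) else p₀ z.2) * k z.1 z.2 := by
    have heq : (fun z : EuclideanSpace ℝ (Fin n) × EuclideanSpace ℝ (Fin m) =>
        (if z.2 ∈ N then (0:ℝ) else p₀ z.2) * k z.1 z.2)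
        = fun z => if z.2 ∈ N then (0:ℝ) else k z.1 z.2 * p₀ z.2 := by
      funext z
      by_cases h : z.2 ∈ N <;> simp [h, mul_comm]
    rw [heq]
    exact hftil_meas
  have hg_meas : Measurable fun z : EuclideanSpace ℝ (Fin n) × EuclideanSpace ℝ (Fin m) =>
      gradient (fun x => (if z.2 ∈ N then (0:ℝ) else p₀ z.2) * k x z.2) z.1 :=
    SMAux.measurable_gradient_uncurry
      (fun x y => (if y ∈ N then (0:ℝ) else p₀ y) * k x y)
      (fun y => (hk_diff y).const_mul _) hf'_meas
  have hg_eq : ∀ z : EuclideanSpace ℝ (Fin n) × EuclideanSpace ℝ (Fin m), z.2 ∉ N →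
      gradient (fun x => (if z.2 ∈ N then (0:ℝ) else p₀ z.2) * k x z.2) z.1
        = p₀ z.2 • gradient (fun x => k x z.2) z.1 := by
    intro z hz
    have h0 : (fun x => (if z.2 ∈ N then (0:ℝ) else p₀ z.2) * k x z.2)
        = fun x => p₀ z.2 * k x z.2 := by
      funext x; simp [hz]
    rw [h0, SMAux.gradient_const_mul (hk_diff z.2 z.1)]
  have hW_slice_aesm : ∀ x, AEStronglyMeasurable
      (fun y => p₀ y • gradient (fun x' => k x' y) x) volume := by
    intro x
    have h1 : Measurable fun y => gradient
        (fun x' => (if y ∈ N then (0:ℝ) else p₀ y) * k x' y) x := by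
      exact hg_meas.comp (measurable_const.prodMk measurable_id)
    refine h1.aestronglyMeasurable.congr ?_
    filter_upwards [hNae] with y hy
    exact hg_eq (x, y) hy
  -- slice integrability from hint₃
  have hint₃' := hint₃
  rw [Measure.volume_eq_prod] at hint₃'
  have h3slice := hint₃'.prod_right_ae
  have hWx_int : ∀ᵐ x : EuclideanSpace ℝ (Fin n),
      Integrable (fun y => p₀ y • gradient (fun x' => k x' y) x) := by
    filter_upwards [h3slice] with x h3x
    have hb : ∀ y, ‖p₀ y • gradient (fun x' => k x' y) x‖
        ≤ k x y * p₀ y + p₀ y * k x y * ‖gradient (fun x' => Real.log (k x' y)) x‖ ^ 2 := by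
      intro y
      rw [hgradk x y, norm_smul, norm_smul, Real.norm_eq_abs, Real.norm_eq_abs,
        abs_of_nonneg (hp₀_nonneg y), abs_of_nonneg (hk_pos x y).le]
      nlinarith [sq_nonneg (1 - ‖gradient (fun x' => Real.log (k x' y)) x‖),
        norm_nonneg (gradient (fun x' => Real.log (k x' y)) x), hp₀_nonneg y, (hk_pos x y).le,
        mul_nonneg (hp₀_nonneg y) (hk_pos x y).le,
        mul_nonneg (mul_nonneg (hp₀_nonneg y) (hk_pos x y).le)
          (sq_nonneg (1 - ‖gradient (fun x' => Real.log (k x' y)) x‖))]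
    exact Integrable.mono' ((hkp_int x).add h3x) (hW_slice_aesm x)
      (Filter.Eventually.of_forall fun y => hb y)
  -- the cross term on the product space
  have hcross_eq : ∀ᵐ x : EuclideanSpace ℝ (Fin n),
      (∫ y, p₀ y * k x y * ⟪S x, gradient (fun x' => Real.log (k x' y)) x⟫)
        = p x * ⟪S x, gradient (fun x' => Real.log (p x')) x⟫ := by
    filter_upwards [hWx_int] with x hx
    have step1 : (∫ y, p₀ y * k x y * ⟪S x, gradient (fun x' => Real.log (k x' y)) x⟫)
        = ∫ y, ⟪S x, p₀ y • gradient (fun x' => k x' y) x⟫ := by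
      refine integral_congr_ae (Filter.Eventually.of_forall fun y => ?_)
      show p₀ y * k x y * ⟪S x, gradient (fun x' => Real.log (k x' y)) x⟫
        = ⟪S x, p₀ y • gradient (fun x' => k x' y) x⟫
      rw [hgradk x y, real_inner_smul_right, real_inner_smul_right]
      ring
    rw [step1, integral_inner hx (S x), ← hp_grad x, hgradp x, real_inner_smul_right]
  have hint₄' := hint₄
  rw [Measure.volume_eq_prod] at hint₄'
  have hF4 : (∫ z : EuclideanSpace ℝ (Fin n) × EuclideanSpace ℝ (Fin m),
      p₀ z.2 * k z.1 z.2 * ⟪S z.1, gradient (fun x' => Real.log (k x' z.2)) z.1⟫)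
        = ∫ x, p x * ⟪S x, gradient (fun x' => Real.log (p x')) x⟫ := by
    rw [Measure.volume_eq_prod, integral_prod _ hint₄']
    exact integral_congr_ae hcross_eq
  -- measurability and integrability of the cross term on the base space
  have hgradp_meas : Measurable fun x => gradient p x := SMAux.measurable_gradient p
  have hG_meas : Measurable fun x => gradient (fun x' => Real.log (p x')) x := by
    have h0 : (fun x => gradient (fun x' => Real.log (p x')) x)
        = fun x => (p x)⁻¹ • gradient p x :=
      funext fun x => SMAux.gradient_log_eq (hp_diff x) (hp_pos x)
    rw [h0]
    exact (hp_diff.continuous.measurable.inv.smul hgradp_meas)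
  have hcrossX_int : Integrable
      (fun x => p x * ⟪S x, gradient (fun x' => Real.log (p x')) x⟫) := by
    refine (hint₁.add hint₂).mono'
      ((hp_diff.continuous.measurable.mul (hS.inner hG_meas)).aestronglyMeasurable)
      (Filter.Eventually.of_forall fun x => ?_)
    show ‖p x * ⟪S x, gradient (fun x' => Real.log (p x')) x⟫‖
      ≤ p x * ‖S x‖ ^ 2 + p x * ‖gradient (fun x' => Real.log (p x')) x‖ ^ 2
    rw [Real.norm_eq_abs, abs_mul, abs_of_nonneg (hp_pos x).le]
    have h5 := abs_real_inner_le_norm (S x) (gradient (fun x' => Real.log (p x')) x)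
    have h6 : (0:ℝ) ≤ p x := (hp_pos x).le
    nlinarith [sq_nonneg (‖S x‖ - ‖gradient (fun x' => Real.log (p x')) x‖),
      norm_nonneg (S x), norm_nonneg (gradient (fun x' => Real.log (p x')) x),
      abs_nonneg (⟪S x, gradient (fun x' => Real.log (p x')) x⟫),
      mul_le_mul_of_nonneg_left h5 h6]
  -- expansion on the base space
  have h7 : Integrable (fun x => p x * ‖S x‖ ^ 2
      - 2 * (p x * ⟪S x, gradient (fun x' => Real.log (p x')) x⟫)) :=
    hint₁.sub (hcrossX_int.const_mul 2)
  have h8 : Integrable (fun x =>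
      2 * (p x * ⟪S x, gradient (fun x' => Real.log (p x')) x⟫)) :=
    hcrossX_int.const_mul 2
  have hA : (∫ x, p x * ‖S x - gradient (fun x' => Real.log (p x')) x‖ ^ 2)
      = (∫ x, p x * ‖S x‖ ^ 2)
        - 2 * (∫ x, p x * ⟪S x, gradient (fun x' => Real.log (p x')) x⟫)
        + ∫ x, p x * ‖gradient (fun x' => Real.log (p x')) x‖ ^ 2 := by
    have hexp : (fun x => p x * ‖S x - gradient (fun x' => Real.log (p x')) x‖ ^ 2)
        = fun x => (p x * ‖S x‖ ^ 2
            - 2 * (p x * ⟪S x, gradient (fun x' => Real.log (p x')) x⟫))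
          + p x * ‖gradient (fun x' => Real.log (p x')) x‖ ^ 2 := by
      funext x
      rw [norm_sub_sq_real]
      ring
    rw [hexp, integral_add h7 hint₂, integral_sub hint₁ h8, integral_const_mul]
  -- expansion on the product space
  have h9 : Integrable (fun z : EuclideanSpace ℝ (Fin n) × EuclideanSpace ℝ (Fin m) =>
      p₀ z.2 * k z.1 z.2 * ‖S z.1‖ ^ 2
        - 2 * (p₀ z.2 * k z.1 z.2 * ⟪S z.1, gradient (fun x' => Real.log (k x' z.2)) z.1⟫)) :=
    hT_int.sub (hint₄.const_mul 2)
  have h10 : Integrable (fun z : EuclideanSpace ℝ (Fin n) × EuclideanSpace ℝ (Fin m) =>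
      2 * (p₀ z.2 * k z.1 z.2 * ⟪S z.1, gradient (fun x' => Real.log (k x' z.2)) z.1⟫)) :=
    hint₄.const_mul 2
  have hB : (∫ z : EuclideanSpace ℝ (Fin n) × EuclideanSpace ℝ (Fin m),
        p₀ z.2 * k z.1 z.2 * ‖S z.1 - gradient (fun x' => Real.log (k x' z.2)) z.1‖ ^ 2)
      = (∫ z : EuclideanSpace ℝ (Fin n) × EuclideanSpace ℝ (Fin m),
          p₀ z.2 * k z.1 z.2 * ‖S z.1‖ ^ 2)
        - 2 * (∫ z : EuclideanSpace ℝ (Fin n) × EuclideanSpace ℝ (Fin m),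
            p₀ z.2 * k z.1 z.2 * ⟪S z.1, gradient (fun x' => Real.log (k x' z.2)) z.1⟫)
        + ∫ z : EuclideanSpace ℝ (Fin n) × EuclideanSpace ℝ (Fin m),
            p₀ z.2 * k z.1 z.2 * ‖gradient (fun x' => Real.log (k x' z.2)) z.1‖ ^ 2 := by
    have hexp : (fun z : EuclideanSpace ℝ (Fin n) × EuclideanSpace ℝ (Fin m) =>
        p₀ z.2 * k z.1 z.2 * ‖S z.1 - gradient (fun x' => Real.log (k x' z.2)) z.1‖ ^ 2)
        = fun z => (p₀ z.2 * k z.1 z.2 * ‖S z.1‖ ^ 2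
            - 2 * (p₀ z.2 * k z.1 z.2 * ⟪S z.1, gradient (fun x' => Real.log (k x' z.2)) z.1⟫))
          + p₀ z.2 * k z.1 z.2 * ‖gradient (fun x' => Real.log (k x' z.2)) z.1‖ ^ 2 := by
      funext z
      rw [norm_sub_sq_real]
      ring
    rw [hexp, integral_add h9 hint₃, integral_sub hT_int h10, integral_const_mul]
  rw [hA, hB, hT_eq, hF4]
  ring
end
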